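/- Let s_0 = 1, s_1, …, s_{L−1}, s_L = 1 be a cycle of states in S with p_{s_{i−1} s_i} = p*_{s_i} for every i = 1,…,L, and fix ε ∈ (0,1). Let n ≥ 1 and suppose the observations satisfy x_{t+jL+i} ∈ X_{s_i} for all j = 0,…,n−1 and i = 1,…,L−1, and x_{t+jL} ∈ X_1 for all j = 1,…,n−1. Then the maximization defining p^{(nL−1)}_{11}(t) is achieved along the cycle, i.e. p^{(nL−1)}_{11}(t) = p^{(L−1)}_{11}(t) f_1(x_{t+L}) · p^{(L−1)}_{11}(t+L) f_1(x_{t+2L}) ⋯ p^{(L−1)}_{11}(t+(n−2)L) f_1(x_{t+(n−1)L}) · p^{(L−1)}_{11}(t+(n−1)L). -/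

import Mathlib

open Finset MeasureTheory

namespace ViterbiHMM

/-- The state space `S = {1,…,K'}` with `K' = K+2 > 1` states. -/
abbrev S (K : ℕ) := Fin (K + 2)

/-- The observation space `X = ℝ^D`. -/
abbrev Obs (D : ℕ) := Fin D → ℝ

variable {K D : ℕ}

/-- Maximum over all states. -/
noncomputable def smax (g : S K → ℝ) : ℝ :=
  Finset.univ.sup' Finset.univ_nonempty g

/-- `p*_l = max_{j ∈ S} p_{j l}`. -/
noncomputable def pstar (p : S K → S K → ℝ) (l : S K) : ℝ :=
  smax fun j => p j l

/-- The likelihood `Λ(q_{1:n}; x_{1:n})` of the path `q` (at times `1,…,n`),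
with initial distribution `ppi`, transition matrix `p`, emission densities `f`
and observations `x` (1-based). -/
noncomputable def lik (ppi : S K → ℝ) (p : S K → S K → ℝ) (f : S K → Obs D → ℝ)
    (x : ℕ → Obs D) (n : ℕ) (q : ℕ → S K) : ℝ :=
  ppi (q 1) * f (q 1) (x 1) *
    ∏ i ∈ Finset.Icc 2 n, (p (q (i - 1)) (q i) * f (q i) (x i))

/-- The scores `δ_u(l)`, via the Viterbi recursion. -/
noncomputable def score (ppi : S K → ℝ) (p : S K → S K → ℝ) (f : S K → Obs D → ℝ)
    (x : ℕ → Obs D) : ℕ → S K → ℝ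
  | 0, l => ppi l
  | 1, l => ppi l * f l (x 1)
  | (u + 2), l => smax (fun i => score ppi p f x (u + 1) i * p i l) * f l (x (u + 2))

/-- `p^{(r)}_{ij}(u)`, the maximal partial likelihood of paths from `i` (at time `u`)
to `j` (at time `u+r+1`). -/
noncomputable def plik (p : S K → S K → ℝ) (f : S K → Obs D → ℝ) (x : ℕ → Obs D) :
    ℕ → ℕ → S K → S K → ℝ
  | _, 0, i, j => p i j
  | u, (r + 1), i, j => smax fun c => plik p f x u r i c * f c (x (u + r + 1)) * p c j

/-- Given `x_{1:u+r}`, the observation `x_u` is an `l`-node of order `r`. -/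
def IsNode (ppi : S K → ℝ) (p : S K → S K → ℝ) (f : S K → Obs D → ℝ)
    (x : ℕ → Obs D) (u r : ℕ) (l : S K) : Prop :=
  ∀ i j : S K, score ppi p f x u i * plik p f x u r i j ≤
    score ppi p f x u l * plik p f x u r l j

/-- A block `b_{1:k}` is an `l`-barrier of order `r` and length `k`: however it is
prefixed, the observation at position `w + k - r` of the concatenation is an `l`-node
of order `r`. -/
def IsBarrier (ppi : S K → ℝ) (p : S K → S K → ℝ) (f : S K → Obs D → ℝ)
    (b : ℕ → Obs D) (k r : ℕ) (l : S K) : Prop :=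
  ∀ w : ℕ, 1 ≤ w → ∀ x' : ℕ → Obs D,
    IsNode ppi p f (fun i => if i ≤ w then x' i else b (i - w)) (w + k - r) r l

/-- The set `V(x_{1:n})` of Viterbi alignments (maximizers of the likelihood);
a path is a function `ℕ → S` used at times `1,…,n`. -/
def Vset (ppi : S K → ℝ) (p : S K → S K → ℝ) (f : S K → Obs D → ℝ)
    (x : ℕ → Obs D) (n : ℕ) : Set (ℕ → S K) :=
  {v | ∀ w : ℕ → S K, lik ppi p f x n w ≤ lik ppi p f x n v}

/-- The set `W^l(x_{1:n})` of maximizers of the likelihood among paths ending in `l`. -/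
def Wset (ppi : S K → ℝ) (p : S K → S K → ℝ) (f : S K → Obs D → ℝ)
    (x : ℕ → Obs D) (n : ℕ) (l : S K) : Set (ℕ → S K) :=
  {v | v n = l ∧ ∀ w : ℕ → S K, w n = l → lik ppi p f x n w ≤ lik ppi p f x n v}

/-- The support `G_i = {x : f_i(x) > 0}`. -/
def G (f : S K → Obs D → ℝ) (i : S K) : Set (Obs D) := {x | 0 < f i x}

/-- `C` is a cluster: the intersection of the supports of the emission densities over `C`
has positive probability under every `P_j`, `j ∈ C`, and zero probability under every
`P_j`, `j ∉ C`. -/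
def IsCluster (Pm : S K → Measure (Obs D)) (f : S K → Obs D → ℝ) (C : Finset (S K)) : Prop :=
  C.Nonempty ∧ (∀ j ∈ C, 0 < Pm j (⋂ i ∈ C, G f i)) ∧ (∀ j ∉ C, Pm j (⋂ i ∈ C, G f i) = 0)

/-- The set `X_l = {x : max_{i ≠ l} p*_i f_i(x) < (1-ε) p*_l f_l(x)}`. -/
def Xl (p : S K → S K → ℝ) (f : S K → Obs D → ℝ) (ε : ℝ) (l : S K) : Set (Obs D) :=
  {x | ∀ i : S K, i ≠ l → pstar p i * f i x < (1 - ε) * (pstar p l * f l x)}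

/-- `mpp r i j` is the maximal probability of a path from `i` to `j` with `r`
intermediate states (so `q*_{ij} = mpp (m-1) i j`). -/
noncomputable def mpp (p : S K → S K → ℝ) : ℕ → S K → S K → ℝ
  | 0, i, j => p i j
  | (r + 1), i, j => smax fun c => mpp p r i c * p c j

/-- The substochastic matrix `Q = (p_{ij})_{i,j ∈ C}`. -/
def Qmat (p : S K → S K → ℝ) (C : Finset (S K)) : Matrix {i // i ∈ C} {i // i ∈ C} ℝ :=
  Matrix.of fun i j => p i.1 j.1


section Aux

variable {K D : ℕ}

lemma le_smax' (g : S K → ℝ) (c : S K) : g c ≤ smax g :=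
  Finset.le_sup' g (Finset.mem_univ c)

lemma smax_le' {g : S K → ℝ} {a : ℝ} (h : ∀ c, g c ≤ a) : smax g ≤ a :=
  Finset.sup'_le _ _ fun c _ => h c

lemma p_le_pstar (p : S K → S K → ℝ) (i l : S K) : p i l ≤ pstar p l :=
  le_smax' (fun j => p j l) i

lemma pstar_nonneg' (p : S K → S K → ℝ) (hp0 : ∀ i j, 0 ≤ p i j) (l : S K) :
    0 ≤ pstar p l := le_trans (hp0 l l) (p_le_pstar p l l)

lemma plik_nonneg' (p : S K → S K → ℝ) (f : S K → Obs D → ℝ) (x : ℕ → Obs D)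
    (hp0 : ∀ i j, 0 ≤ p i j) (hf0 : ∀ l y, 0 ≤ f l y) :
    ∀ r u i j, 0 ≤ plik p f x u r i j := by
  intro r
  induction r with
  | zero => intro u i j; exact hp0 i j
  | succ r ih =>
    intro u i j
    simp only [plik]
    refine le_trans ?_ (le_smax' _ i)
    exact mul_nonneg (mul_nonneg (ih u i i) (hf0 _ _)) (hp0 _ _)

lemma xl_bound (p : S K → S K → ℝ) (f : S K → Obs D → ℝ)
    (hp0 : ∀ i j, 0 ≤ p i j) (hf0 : ∀ l y, 0 ≤ f l y)
    {ε : ℝ} (hε : 0 < ε) {l : S K} {y : Obs D} (hy : y ∈ Xl p f ε l) (c : S K) :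
    pstar p c * f c y ≤ pstar p l * f l y := by
  by_cases hc : c = l
  · subst hc; exact le_refl _
  · have h1 := hy c hc
    have h0 : 0 ≤ pstar p l * f l y :=
      mul_nonneg (pstar_nonneg' p hp0 l) (hf0 l y)
    nlinarith

lemma plik_upper (p : S K → S K → ℝ) (f : S K → Obs D → ℝ) (x : ℕ → Obs D)
    (hp0 : ∀ i j, 0 ≤ p i j) (hf0 : ∀ l y, 0 ≤ f l y)
    {ε : ℝ} (hε : 0 < ε) (σ : ℕ → S K) :
    ∀ r u i j, (∀ k ∈ Finset.Icc 1 r, x (u + k) ∈ Xl p f ε (σ k)) →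
    plik p f x u r i j ≤
      (∏ k ∈ Finset.Icc 1 r, pstar p (σ k) * f (σ k) (x (u + k))) * pstar p j := by
  intro r
  induction r with
  | zero =>
    intro u i j _
    simpa [plik] using p_le_pstar p i j
  | succ r ih =>
    intro u i j hobs
    simp only [plik]
    apply smax_le'
    intro c
    have h1 : plik p f x u r i c ≤
        (∏ k ∈ Finset.Icc 1 r, pstar p (σ k) * f (σ k) (x (u + k))) * pstar p c :=
      ih u i c fun k hk => hobs k (Finset.mem_Icc.mpr ⟨(Finset.mem_Icc.mp hk).1,
        le_trans (Finset.mem_Icc.mp hk).2 (Nat.le_succ r)⟩)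
    have hP : 0 ≤ ∏ k ∈ Finset.Icc 1 r, pstar p (σ k) * f (σ k) (x (u + k)) :=
      Finset.prod_nonneg fun k _ => mul_nonneg (pstar_nonneg' p hp0 _) (hf0 _ _)
    have h2 : pstar p c * f c (x (u + (r + 1))) ≤
        pstar p (σ (r + 1)) * f (σ (r + 1)) (x (u + (r + 1))) :=
      xl_bound p f hp0 hf0 hε (hobs (r + 1)
        (Finset.mem_Icc.mpr ⟨Nat.le_add_left 1 r, le_refl _⟩)) c
    have h3 : p c j ≤ pstar p j := p_le_pstar p c j
    rw [Finset.prod_Icc_succ_top (Nat.le_add_left 1 r)]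
    have hxru : u + r + 1 = u + (r + 1) := by omega
    rw [hxru]
    calc plik p f x u r i c * f c (x (u + (r + 1))) * p c j
        ≤ ((∏ k ∈ Finset.Icc 1 r, pstar p (σ k) * f (σ k) (x (u + k))) * pstar p c)
            * f c (x (u + (r + 1))) * p c j := by
          apply mul_le_mul_of_nonneg_right _ (hp0 c j)
          exact mul_le_mul_of_nonneg_right h1 (hf0 _ _)
      _ = (∏ k ∈ Finset.Icc 1 r, pstar p (σ k) * f (σ k) (x (u + k)))
            * (pstar p c * f c (x (u + (r + 1)))) * p c j := by ring
      _ ≤ (∏ k ∈ Finset.Icc 1 r, pstar p (σ k) * f (σ k) (x (u + k)))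
            * (pstar p (σ (r + 1)) * f (σ (r + 1)) (x (u + (r + 1)))) * pstar p j := by
          apply mul_le_mul
          · exact mul_le_mul_of_nonneg_left h2 hP
          · exact h3
          · exact hp0 c j
          · exact mul_nonneg hP (mul_nonneg (pstar_nonneg' p hp0 _) (hf0 _ _))
      _ = (∏ k ∈ Finset.Icc 1 r, pstar p (σ k) * f (σ k) (x (u + k))) *
            (pstar p (σ (r + 1)) * f (σ (r + 1)) (x (u + (r + 1)))) * pstar p j := rfl

lemma plik_lower (p : S K → S K → ℝ) (f : S K → Obs D → ℝ) (x : ℕ → Obs D)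
    (hp0 : ∀ i j, 0 ≤ p i j) (hf0 : ∀ l y, 0 ≤ f l y) (q : ℕ → S K) :
    ∀ r u j, (∏ k ∈ Finset.Icc 1 r, p (q (k - 1)) (q k) * f (q k) (x (u + k))) * p (q r) j ≤
      plik p f x u r (q 0) j := by
  intro r
  induction r with
  | zero => intro u j; simp [plik]
  | succ r ih =>
    intro u j
    simp only [plik]
    refine le_trans ?_ (le_smax' _ (q (r + 1)))
    rw [Finset.prod_Icc_succ_top (Nat.le_add_left 1 r)]
    have hk1 : (r + 1 : ℕ) - 1 = r := by omega
    rw [hk1]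
    have hxru : u + r + 1 = u + (r + 1) := by omega
    rw [hxru]
    calc (∏ k ∈ Finset.Icc 1 r, p (q (k - 1)) (q k) * f (q k) (x (u + k)))
          * (p (q r) (q (r + 1)) * f (q (r + 1)) (x (u + (r + 1)))) * p (q (r + 1)) j
        = ((∏ k ∈ Finset.Icc 1 r, p (q (k - 1)) (q k) * f (q k) (x (u + k)))
            * p (q r) (q (r + 1))) * f (q (r + 1)) (x (u + (r + 1))) * p (q (r + 1)) j := by
          ring
      _ ≤ plik p f x u r (q 0) (q (r + 1)) * f (q (r + 1)) (x (u + (r + 1))) * p (q (r + 1)) j := by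
          apply mul_le_mul_of_nonneg_right _ (hp0 _ _)
          exact mul_le_mul_of_nonneg_right (ih u (q (r + 1))) (hf0 _ _)

lemma plik_eq_cycle (p : S K → S K → ℝ) (f : S K → Obs D → ℝ) (x : ℕ → Obs D)
    (hp0 : ∀ i j, 0 ≤ p i j) (hf0 : ∀ l y, 0 ≤ f l y)
    (st1 : S K) (L : ℕ) (hL : 1 ≤ L) (s : ℕ → S K)
    (hs0 : s 0 = st1) (hsL : s L = st1)
    (hcyc : ∀ i ∈ Finset.Icc 1 L, p (s (i - 1)) (s i) = pstar p (s i))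
    {ε : ℝ} (hε : 0 < ε)
    (m u : ℕ) (hm : 1 ≤ m)
    (H : ∀ k ∈ Finset.Icc 1 (m * L - 1), x (u + k) ∈ Xl p f ε (s (k % L))) :
    plik p f x u (m * L - 1) st1 st1 =
      (∏ k ∈ Finset.Icc 1 (m * L - 1), pstar p (s (k % L)) * f (s (k % L)) (x (u + k)))
        * pstar p st1 := by
  have hmod : ∀ k : ℕ, 1 ≤ k → p (s ((k - 1) % L)) (s (k % L)) = pstar p (s (k % L)) := by
    intro k hk
    have hdm := Nat.div_add_mod k L
    set i := k % L with hi
    have hiL : i < L := Nat.mod_lt _ (by omega)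
    by_cases hi0 : i = 0
    · -- k = L * (k / L), k / L ≥ 1
      have hd : 1 ≤ k / L := by
        rcases Nat.eq_zero_or_pos (k / L) with h | h
        · rw [h, Nat.mul_zero] at hdm; omega
        · exact h
      obtain ⟨d', hd'⟩ : ∃ d', k / L = d' + 1 := ⟨k / L - 1, by omega⟩
      rw [hd'] at hdm
      have hk' : k = L * d' + L := by
        have hLL : L * (d' + 1) = L * d' + L := by ring
        omega
      have hk1 : k - 1 = L * d' + (L - 1) := by omega
      have hmod1 : (k - 1) % L = L - 1 := by
        rw [hk1, Nat.mul_add_mod, Nat.mod_eq_of_lt (by omega)]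
      rw [hmod1, hi0, hs0, ← hsL]
      exact hcyc L (Finset.mem_Icc.mpr ⟨hL, le_refl L⟩)
    · have hi1 : 1 ≤ i := by omega
      have hk1 : k - 1 = L * (k / L) + (i - 1) := by omega
      have hmod1 : (k - 1) % L = i - 1 := by
        rw [hk1, Nat.mul_add_mod, Nat.mod_eq_of_lt (by omega)]
      rw [hmod1]
      exact hcyc i (Finset.mem_Icc.mpr ⟨hi1, by omega⟩)
  have hend : (m * L - 1) % L = L - 1 := by
    obtain ⟨m', rfl⟩ : ∃ m', m = m' + 1 := ⟨m - 1, by omega⟩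
    have h1 : (m' + 1) * L = m' * L + L := by ring
    have h2 : (m' + 1) * L - 1 = L * m' + (L - 1) := by
      rw [h1]; rw [Nat.mul_comm L m']; omega
    rw [h2, Nat.mul_add_mod, Nat.mod_eq_of_lt (by omega)]
  apply le_antisymm
  · exact plik_upper p f x hp0 hf0 hε (fun k => s (k % L)) (m * L - 1) u st1 st1 H
  · have hlow := plik_lower p f x hp0 hf0 (fun k => s (k % L)) (m * L - 1) u st1
    simp only [Nat.zero_mod, hs0] at hlow
    have hprod : (∏ k ∈ Finset.Icc 1 (m * L - 1),
        p (s ((k - 1) % L)) (s (k % L)) * f (s (k % L)) (x (u + k))) =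
        ∏ k ∈ Finset.Icc 1 (m * L - 1), pstar p (s (k % L)) * f (s (k % L)) (x (u + k)) := by
      apply Finset.prod_congr rfl
      intro k hk
      rw [hmod k (Finset.mem_Icc.mp hk).1]
    have hendp : p (s ((m * L - 1) % L)) st1 = pstar p st1 := by
      rw [hend, ← hsL]
      have := hcyc L (Finset.mem_Icc.mpr ⟨hL, le_refl L⟩)
      rw [hsL] at this ⊢
      exact this
    rw [hprod, hendp] at hlow
    exact hlow

lemma Icc_shift_prod (g : ℕ → ℝ) (a : ℕ) (ha : 1 ≤ a) :
    ∀ b, ∏ k ∈ Finset.Icc 1 (a + b), g k =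
      ((∏ k ∈ Finset.Icc 1 (a - 1), g k) * g a) * ∏ k ∈ Finset.Icc 1 b, g (a + k) := by
  intro b
  induction b with
  | zero =>
    simp only [Nat.add_zero, Finset.Icc_self]
    rw [show a = (a - 1) + 1 by omega, Finset.prod_Icc_succ_top (by omega)]
    simp [show (a - 1) + 1 = a by omega]
  | succ b ih =>
    rw [show a + (b + 1) = (a + b) + 1 by omega,
      Finset.prod_Icc_succ_top (by omega), ih,
      Finset.prod_Icc_succ_top (Nat.le_add_left 1 b)]
    ring_nf

lemma prod_cycle_split (g : ℕ → ℝ) (L : ℕ) (hL : 1 ≤ L) :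
    ∀ n, 1 ≤ n →
      ∏ k ∈ Finset.Icc 1 (n * L - 1), g k =
        (∏ j ∈ Finset.range (n - 1),
          (∏ k ∈ Finset.Icc 1 (L - 1), g (j * L + k)) * g ((j + 1) * L)) *
          ∏ k ∈ Finset.Icc 1 (L - 1), g ((n - 1) * L + k) := by
  intro n
  induction n with
  | zero => omega
  | succ n ih =>
    intro _
    by_cases hn : n = 0
    · subst hn
      simp
    · have hn1 : 1 ≤ n := by omega
      have IH := ih hn1
      have hsplit : (n + 1) * L - 1 = n * L + (L - 1) := by
        have : (n + 1) * L = n * L + L := by ring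
        omega
      have hnL : 1 ≤ n * L := Nat.one_le_iff_ne_zero.mpr (by positivity)
      rw [hsplit, Icc_shift_prod g (n * L) hnL (L - 1), IH]
      rw [show n + 1 - 1 = n by omega,
        show n = (n - 1) + 1 by omega, Finset.prod_range_succ,
        show (n - 1) + 1 = n by omega]
      ring

end Aux

/-- equation (kohus): over `n` consecutive maximal-transition cycles with
matching observations, the maximization defining `p^{(nL-1)}_{11}(t)` is achieved along the
cycle, i.e. it factorizes over the cycles. -/
theorem plik_cycle_factorization {K D : ℕ} (p : S K → S K → ℝ) (f : S K → Obs D → ℝ)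
    (x : ℕ → Obs D)
    (hp0 : ∀ i j, 0 ≤ p i j) (hf0 : ∀ l y, 0 ≤ f l y) (hpstar : ∀ l, 0 < pstar p l)
    (st1 : S K) (L : ℕ) (hL : 1 ≤ L) (s : ℕ → S K)
    (hs0 : s 0 = st1) (hsL : s L = st1)
    (hcyc : ∀ i ∈ Finset.Icc 1 L, p (s (i - 1)) (s i) = pstar p (s i))
    (ε : ℝ) (hε : 0 < ε) (hε1 : ε < 1)
    (t n : ℕ) (hn : 1 ≤ n)
    (hobs1 : ∀ j < n, ∀ i ∈ Finset.Icc 1 (L - 1), x (t + j * L + i) ∈ Xl p f ε (s i))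
    (hobs2 : ∀ j ∈ Finset.Icc 1 (n - 1), x (t + j * L) ∈ Xl p f ε st1) :
    plik p f x t (n * L - 1) st1 st1 =
      (∏ j ∈ Finset.range (n - 1),
        plik p f x (t + j * L) (L - 1) st1 st1 * f st1 (x (t + (j + 1) * L))) *
        plik p f x (t + (n - 1) * L) (L - 1) st1 st1 := by
  set g : ℕ → ℝ := fun k => pstar p (s (k % L)) * f (s (k % L)) (x (t + k)) with hg
  have Hmain : ∀ k ∈ Finset.Icc 1 (n * L - 1), x (t + k) ∈ Xl p f ε (s (k % L)) := by
    intro k hk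
    obtain ⟨hk1, hk2⟩ := Finset.mem_Icc.mp hk
    have hdm := Nat.div_add_mod k L
    set i := k % L with hi
    have hiL : i < L := Nat.mod_lt _ (by omega)
    set d := k / L with hd
    have hdn : d < n := by
      by_contra h
      push_neg at h
      have hle : n * L ≤ L * d := by
        calc n * L = L * n := Nat.mul_comm n L
          _ ≤ L * d := Nat.mul_le_mul_left L h
      omega
    by_cases hi0 : i = 0
    · have hd1 : 1 ≤ d := by
        rcases Nat.eq_zero_or_pos d with h | h
        · rw [h, Nat.mul_zero] at hdm; omega
        · exact h
      have h2 := hobs2 d (Finset.mem_Icc.mpr ⟨hd1, by omega⟩)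
      rw [hi0, hs0]
      have hkk : t + d * L = t + k := by rw [Nat.mul_comm d L]; omega
      rwa [hkk] at h2
    · have h1 := hobs1 d hdn i (Finset.mem_Icc.mpr ⟨by omega, by omega⟩)
      have hkk : t + d * L + i = t + k := by rw [Nat.mul_comm d L]; omega
      rwa [hkk] at h1
  have Hcyc : ∀ j, j < n → plik p f x (t + j * L) (L - 1) st1 st1 =
      (∏ k ∈ Finset.Icc 1 (L - 1), g (j * L + k)) * pstar p st1 := by
    intro j hj
    have h1L : 1 * L - 1 = L - 1 := by omega
    have heq := plik_eq_cycle p f x hp0 hf0 st1 L hL s hs0 hsL hcyc hε 1 (t + j * L)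
      (le_refl 1) ?_
    · rw [h1L] at heq
      rw [heq]
      congr 1
      apply Finset.prod_congr rfl
      intro k hk
      obtain ⟨hk1, hk2⟩ := Finset.mem_Icc.mp hk
      have hmod : (j * L + k) % L = k % L := by
        rw [Nat.add_comm, Nat.add_mul_mod_self_right]
      simp only [hg]
      rw [hmod, show t + (j * L + k) = t + j * L + k from by omega]
    · intro k hk
      rw [h1L] at hk
      obtain ⟨hk1, hk2⟩ := Finset.mem_Icc.mp hk
      have hkL : k % L = k := Nat.mod_eq_of_lt (by omega)
      rw [hkL]
      exact hobs1 j hj k (Finset.mem_Icc.mpr ⟨hk1, hk2⟩)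
  have Emain := plik_eq_cycle p f x hp0 hf0 st1 L hL s hs0 hsL hcyc hε n t hn Hmain
  rw [Emain]
  have hRHS : ∀ j ∈ Finset.range (n - 1),
      plik p f x (t + j * L) (L - 1) st1 st1 * f st1 (x (t + (j + 1) * L)) =
      (∏ k ∈ Finset.Icc 1 (L - 1), g (j * L + k)) * g ((j + 1) * L) := by
    intro j hj
    have hj' : j < n := by have := Finset.mem_range.mp hj; omega
    rw [Hcyc j hj']
    have hgj : g ((j + 1) * L) = pstar p st1 * f st1 (x (t + (j + 1) * L)) := by
      simp only [hg]
      rw [Nat.mul_mod_left, hs0]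
    rw [hgj]; ring
  rw [Finset.prod_congr rfl hRHS, Hcyc (n - 1) (by omega)]
  rw [prod_cycle_split g L hL n hn]
  ring

end ViterbiHMM
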